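/- For every k ≥ 1, the k-star query q :- R_1('a', x_1), R_2(x_2), …, R_k(x_k), R_0(x_1,…,x_k), where 'a' is a constant and x_1,…,x_k are existential variables, has exactly k! minimal safe dissociations (equivalently, minimal query plans). -/
import Mathlib


open scoped Classical

namespace PDB

noncomputable section

/-! ### Monotone DNF formulas over a finite variable set -/

/-- Probability that a monotone DNF formula (given by its finite set of implicants, each a
finite set of positive variables) is true, when each variable `x` is independently true with
probability `p x`. -/
def dnfProb {X : Type*} [Fintype X] (p : X → ℝ) (F : Finset (Finset X)) : ℝ :=
  ∑ ω : X → Bool,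
    (∏ x : X, if ω x = true then p x else 1 - p x) *
      (if ∃ T ∈ F, ∀ x ∈ T, ω x = true then 1 else 0)

/-- A prime implicant of a monotone DNF formula: a minimal implicant. -/
def IsPrimeImplicant {X : Type*} (F : Finset (Finset X)) (T : Finset X) : Prop :=
  T ∈ F ∧ ∀ S ∈ F, S ⊆ T → S = T

variable {A V dom : Type*}

/-! ### Self-join-free conjunctive queries: hierarchy and connectivity.
A self-join-free conjunctive query is given by its atoms: a family `atoms : A → Finset V`
assigning to each of the (pairwise distinct) relation symbols its finite set of variables;
`H` denotes the set of head variables (treated as constants); all other variables are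
existential.  A Boolean query has `H = ∅`. -/

/-- `at(x)`: the atoms among `S` that contain the variable `x`. -/
def atOf (atoms : A → Finset V) (S : Finset A) (x : V) : Finset A :=
  S.filter (fun i => x ∈ atoms i)

/-- The query consisting of the atoms `S` is hierarchical, with the variables in `H`
treated as constants (head variables): for any two existential variables, their atom sets
are comparable or disjoint. -/
def HierOn (atoms : A → Finset V) (S : Finset A) (H : Finset V) : Prop :=
  ∀ x : V, x ∉ H → ∀ y : V, y ∉ H →
    atOf atoms S x ⊆ atOf atoms S y ∨ atOf atoms S x ∩ atOf atoms S y = ∅ ∨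
      atOf atoms S y ⊆ atOf atoms S x

/-- A Boolean query (with all its atoms) is hierarchical. -/
def Hier [Fintype A] (atoms : A → Finset V) : Prop :=
  HierOn atoms Finset.univ ∅

/-- The set of atoms `S` is disconnected: it can be partitioned into two nonempty sets
sharing no variables. -/
def Disconn (atoms : A → Finset V) (S : Finset A) : Prop :=
  ∃ T : Finset A, T ⊆ S ∧ T.Nonempty ∧ (S \ T).Nonempty ∧
    ∀ i ∈ T, ∀ j ∈ S \ T, atoms i ∩ atoms j = ∅

/-- `T` is a connected component of the set of atoms `S`: a maximal connected subset. -/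
def IsComp (atoms : A → Finset V) (S T : Finset A) : Prop :=
  T ⊆ S ∧ T.Nonempty ∧ ¬ Disconn atoms T ∧
    ∀ U : Finset A, T ⊆ U → U ⊆ S → ¬ Disconn atoms U → U = T

/-- `xs` is a cut-set of the query with atoms `S`: a set of its variables whose removal
disconnects the query. -/
def IsCutSet (atoms : A → Finset V) (S : Finset A) (xs : Finset V) : Prop :=
  xs ⊆ S.sup atoms ∧ Disconn (fun i => atoms i \ xs) S

/-- a minimal cut-set (min-cut-set) -/
def MinCut (atoms : A → Finset V) (S : Finset A) (xs : Finset V) : Prop :=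
  IsCutSet atoms S xs ∧ ∀ ys : Finset V, ys ⊂ xs → ¬ IsCutSet atoms S ys

/-- the separator variables of a Boolean query: the variables occurring in every atom -/
def SepVars [Fintype A] [Fintype V] (atoms : A → Finset V) : Finset V :=
  Finset.univ.filter (fun x => ∀ i : A, x ∈ atoms i)

/-- the set of variables of a query -/
def varsOf [Fintype A] (atoms : A → Finset V) : Finset V :=
  Finset.univ.sup atoms

/-! ### Dissociations -/

/-- `Δ` is a dissociation of the query with atoms `atoms` and head variables `H`:
each atom receives extra existential variables of the query that it does not already
contain. -/
def IsDiss [Fintype A] (atoms : A → Finset V) (H : Finset V) (Δ : A → Finset V) : Prop :=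
  ∀ i : A, Δ i ⊆ (varsOf atoms \ H) \ atoms i

/-- the atoms of the dissociated query `q^Δ` -/
def dissAtoms (atoms Δ : A → Finset V) : A → Finset V := fun i => atoms i ∪ Δ i

/-- the partial dissociation order `Δ ≼ Δ'` -/
def dissLE (Δ Δ' : A → Finset V) : Prop := ∀ i : A, Δ i ⊆ Δ' i

/-- a safe dissociation: the dissociated query is hierarchical -/
def SafeDiss [Fintype A] (atoms : A → Finset V) (H : Finset V) (Δ : A → Finset V) : Prop :=
  IsDiss atoms H Δ ∧ HierOn (dissAtoms atoms Δ) Finset.univ H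

/-- a minimal safe dissociation: no smaller dissociation (in the order `≼`) is safe -/
def MinSafeDiss [Fintype A] (atoms : A → Finset V) (H : Finset V) (Δ : A → Finset V) : Prop :=
  SafeDiss atoms H Δ ∧
    ∀ Δ' : A → Finset V, SafeDiss atoms H Δ' → dissLE Δ' Δ → Δ' = Δ

/-! ### Tuple-independent probabilistic databases -/

/-- A tuple-independent probabilistic database for the query with atoms `atoms` over the
finite domain `dom`: each relation `i` is a finite set of tuples (functions from the
variables of the atom to the domain), each carrying a probability. -/
structure DB (atoms : A → Finset V) (dom : Type*) where
  tuples : ∀ i : A, Finset ({x // x ∈ atoms i} → dom)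
  prob : ∀ i : A, ({x // x ∈ atoms i} → dom) → ℝ

/-- all tuple probabilities lie in [0,1] -/
def DB.Valid {atoms : A → Finset V} (D : DB atoms dom) : Prop :=
  ∀ i : A, ∀ t ∈ D.tuples i, 0 ≤ D.prob i t ∧ D.prob i t ≤ 1

/-- the restriction of a valuation of all variables to the tuple format of atom `i` -/
def restrict (atoms : A → Finset V) (i : A) (ν : V → dom) : {x // x ∈ atoms i} → dom :=
  fun x => ν x.1

/-- restriction of a tuple to a smaller variable set -/
def restrictTup {xs ys : Finset V} (h : xs ⊆ ys) (t : {x // x ∈ ys} → dom) :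
    {x // x ∈ xs} → dom :=
  fun x => t ⟨x.1, h x.2⟩

/-- `P(q)`: the probability that the Boolean query with atoms `atoms` is true in a possible
world chosen by independently including each tuple `t` of `D` with probability `p(t)`. -/
def queryProb [Fintype A] (atoms : A → Finset V) (D : DB atoms dom) : ℝ :=
  ∑ W : ∀ i : A, {t // t ∈ D.tuples i} → Bool,
    (∏ i : A, ∏ t : {t // t ∈ D.tuples i},
        if W i t = true then D.prob i t.1 else 1 - D.prob i t.1) *
      (if ∃ ν : V → dom, ∀ i : A,
            ∃ h : restrict atoms i ν ∈ D.tuples i, W i ⟨restrict atoms i ν, h⟩ = true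
        then 1 else 0)

/-- The dissociated database `D^Δ`: relation `R_i^{ȳ_i}` contains one copy of each tuple
`t ∈ R_i` for every assignment of the added variables `ȳ_i` to domain values, with the same
probability as `t`. -/
def dissDB [Fintype dom] (atoms Δ : A → Finset V) (D : DB atoms dom) :
    DB (dissAtoms atoms Δ) dom where
  tuples i := Finset.univ.filter
    (fun t : {x // x ∈ dissAtoms atoms Δ i} → dom =>
      restrictTup (show atoms i ⊆ dissAtoms atoms Δ i from Finset.subset_union_left) t
        ∈ D.tuples i)
  prob i t :=
    D.prob i
      (restrictTup (show atoms i ⊆ dissAtoms atoms Δ i from Finset.subset_union_left) t)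

/-- `P(q^Δ)`: the probability of the dissociated query on the dissociated database. -/
def dissProb [Fintype A] [Fintype dom] (atoms Δ : A → Finset V) (D : DB atoms dom) : ℝ :=
  queryProb (dissAtoms atoms Δ) (dissDB atoms Δ D)

/-- The propagation score `ρ(q)`: the minimum of `P(q^Δ)` over all safe dissociations. -/
def propScore [Fintype A] [Fintype dom] (atoms : A → Finset V)
    (D : DB atoms dom) : ℝ :=
  sInf { r : ℝ | ∃ Δ : A → Finset V, SafeDiss atoms ∅ Δ ∧ r = dissProb atoms Δ D }

/-- the database with all tuple probabilities scaled by the factor `f` -/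
def scaleDB {atoms : A → Finset V} (D : DB atoms dom) (f : ℝ) : DB atoms dom where
  tuples := D.tuples
  prob i t := f * D.prob i t

/-- relation `i` is deterministic: all its tuples have probability 1 (otherwise it is
probabilistic) -/
def Deterministic {atoms : A → Finset V} (D : DB atoms dom) (i : A) : Prop :=
  ∀ t ∈ D.tuples i, D.prob i t = 1

/-- The lineage `F_{q,D}` of the Boolean query on `D`: the monotone DNF over the tuples of
`D` whose implicants correspond to the satisfying assignments of the query. -/
def lineage [Fintype A] [Fintype V] [Fintype dom] (atoms : A → Finset V)
    (D : DB atoms dom) :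
    Finset (Finset (Σ i : A, {x // x ∈ atoms i} → dom)) :=
  ((Finset.univ : Finset (V → dom)).filter
      (fun ν => ∀ i : A, restrict atoms i ν ∈ D.tuples i)).image
    (fun ν => Finset.univ.image
      (fun i : A => (⟨i, restrict atoms i ν⟩ : Σ i : A, {x // x ∈ atoms i} → dom)))

/-- The substitution `θ : D^Δ → D` mapping every tuple of a dissociated relation
`R_i^{ȳ_i}` to its projection onto the original variables of `R_i`. -/
def dissTupleMap (atoms Δ : A → Finset V) :
    (Σ i : A, {x // x ∈ dissAtoms atoms Δ i} → dom) →
      Σ i : A, {x // x ∈ atoms i} → dom :=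
  fun t =>
    ⟨t.1, restrictTup (show atoms t.1 ⊆ dissAtoms atoms Δ t.1 from Finset.subset_union_left)
      t.2⟩

/-! ### Functional dependencies -/

/-- `Determines Γ xs y`: the variable `y` is in the closure `xs⁺` of `xs` under the
functional dependencies `Γ`. -/
inductive Determines (Γ : Set (Finset V × V)) : Finset V → V → Prop
  | mem (xs : Finset V) (y : V) (h : y ∈ xs) : Determines Γ xs y
  | step (xs : Finset V) (fd : Finset V × V) (hfd : fd ∈ Γ)
      (hall : ∀ z ∈ fd.1, Determines Γ xs z) : Determines Γ xs fd.2

/-- The functional dependency `fd` is an FD on the attributes of relation `j` that holds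
in the database `D`. -/
def FDHolds (atoms : A → Finset V) (D : DB atoms dom) (j : A) (fd : Finset V × V) : Prop :=
  ∃ h1 : fd.1 ⊆ atoms j, ∃ h2 : fd.2 ∈ atoms j,
    ∀ t ∈ D.tuples j, ∀ t' ∈ D.tuples j,
      (∀ v : V, ∀ hv : v ∈ fd.1, t ⟨v, h1 hv⟩ = t' ⟨v, h1 hv⟩) →
        t ⟨fd.2, h2⟩ = t' ⟨fd.2, h2⟩

/-! ### Query plans -/

/-- Query plans: atoms, duplicate-eliminating projections (given by the retained head
variables), and k-ary natural joins. -/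
inductive Plan (A V : Type*) where
  | atom : A → Plan A V
  | proj : Finset V → Plan A V → Plan A V
  | join : List (Plan A V) → Plan A V

namespace Plan

/-- the head variables of a plan -/
def hvar (atoms : A → Finset V) : Plan A V → Finset V
  | .atom i => atoms i
  | .proj hv _ => hv
  | .join Ps => Ps.attach.foldr (fun P acc => hvar atoms P.1 ∪ acc) ∅
decreasing_by
  all_goals simp_wf
  all_goals try have := List.sizeOf_lt_of_mem P.2
  all_goals omega

/-- the multiset of atoms used by a plan -/
def atomsOf : Plan A V → Multiset A
  | .atom i => {i}
  | .proj _ P => atomsOf P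
  | .join Ps => Ps.attach.foldr (fun P acc => atomsOf P.1 + acc) 0
decreasing_by
  all_goals simp_wf
  all_goals try have := List.sizeOf_lt_of_mem P.2
  all_goals omega

def isProj : Plan A V → Prop
  | .proj _ _ => True
  | _ => False

def isJoin : Plan A V → Prop
  | .join _ => True
  | _ => False

/-- structural well-formedness: projections only retain available variables, joins are at
least binary, and joins and projections alternate -/
def WF (atoms : A → Finset V) : Plan A V → Prop
  | .atom _ => True
  | .proj hv P => hv ⊆ hvar atoms P ∧ ¬ isProj P ∧ WF atoms P
  | .join Ps => 2 ≤ Ps.length ∧ ∀ P ∈ Ps, ¬ isJoin P ∧ WF atoms P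
decreasing_by
  all_goals simp_wf
  all_goals try rename_i h; try have := List.sizeOf_lt_of_mem h
  all_goals omega

/-- a safe plan: at every join, all subplans have the same head variables -/
def Safe (atoms : A → Finset V) : Plan A V → Prop
  | .atom _ => True
  | .proj _ P => Safe atoms P
  | .join Ps => (∀ P ∈ Ps, Safe atoms P) ∧
      ∀ P ∈ Ps, ∀ Q ∈ Ps, hvar atoms P = hvar atoms Q
decreasing_by
  all_goals simp_wf
  all_goals try rename_i h; try have := List.sizeOf_lt_of_mem h
  all_goals omega

/-- `P` is a (well-formed) query plan for the query with atoms `atoms` and head variables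
`H`: it uses every atom exactly once and its output head variables are exactly `H`
(for a Boolean query, `H = ∅`, i.e. all existential variables are projected away). -/
def IsPlanFor [Fintype A] (atoms : A → Finset V) (H : Finset V) (P : Plan A V) : Prop :=
  WF atoms P ∧ atomsOf P = (Finset.univ : Finset A).val ∧ hvar atoms P = H

/-- the join variables: the union of the head variables of a list of subplans -/
def joinVars (atoms : A → Finset V) (Ps : List (Plan A V)) : Finset V :=
  (Ps.map (hvar atoms)).foldr (· ∪ ·) ∅

/-- Identification of plans up to join order, flattening of nested joins, and removal of
trivial (identity) projections. -/
inductive Equiv (atoms : A → Finset V) : Plan A V → Plan A V → Prop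
  | refl (P) : Equiv atoms P P
  | symm {P Q} : Equiv atoms P Q → Equiv atoms Q P
  | trans {P Q R} : Equiv atoms P Q → Equiv atoms Q R → Equiv atoms P R
  | projCongr (hv) {P Q} : Equiv atoms P Q → Equiv atoms (.proj hv P) (.proj hv Q)
  | joinCongr {Ps Qs} : List.Forall₂ (Equiv atoms) Ps Qs →
      Equiv atoms (.join Ps) (.join Qs)
  | joinPerm {Ps Qs} : Ps.Perm Qs → Equiv atoms (.join Ps) (.join Qs)
  | joinFlatten (Ps Qs Rs) :
      Equiv atoms (.join (Ps ++ .join Qs :: Rs)) (.join (Ps ++ Qs ++ Rs))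
  | projTriv {P} (hv) (h : hv = hvar atoms P) : Equiv atoms (.proj hv P) P

/-- The extensional score semantics of a plan evaluated on the database `D`: output tuples
are represented by total valuations `ν : V → dom` (only the values on the head variables
matter; duplicates are represented canonically by the default value `d₀` outside the head
variables).  Joins multiply scores, and duplicate-eliminating projections combine the
scores `s_1, …, s_n` of the tuples projecting to a common output tuple to
`1 - ∏ (1 - s_i)`. -/
def score [Fintype V] [Fintype dom] (atoms : A → Finset V) (D : DB atoms dom) (d₀ : dom) :
    Plan A V → (V → dom) → ℝ
  | .atom i, ν =>
      if restrict atoms i ν ∈ D.tuples i then D.prob i (restrict atoms i ν) else 0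
  | .proj hv P, ν =>
      1 - ∏ μ ∈ Finset.univ.filter (fun μ : V → dom =>
            (∀ v : V, v ∉ hvar atoms P → μ v = d₀) ∧ ∀ v ∈ hv, μ v = ν v),
          (1 - score atoms D d₀ P μ)
  | .join Ps, ν => (Ps.attach.map (fun P => score atoms D d₀ P.1 ν)).prod
decreasing_by
  all_goals simp_wf
  all_goals try have := List.sizeOf_lt_of_mem P.2
  all_goals omega

/-- the score of a Boolean plan -/
def bscore [Fintype V] [Fintype dom] [Inhabited dom] (atoms : A → Finset V)
    (D : DB atoms dom) (P : Plan A V) : ℝ :=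
  score atoms D default P (fun _ => default)

/-- Dropping the dissociated variables from a plan (for a dissociated query) to obtain the
corresponding plan `P^Δ` for the original query: every projection list is restricted to
the variables actually available in the original query. -/
def eraseTo (atoms : A → Finset V) : Plan A V → Plan A V
  | .atom i => .atom i
  | .proj hv P => .proj (hv ∩ hvar atoms (eraseTo atoms P)) (eraseTo atoms P)
  | .join Ps => .join (Ps.attach.map (fun P => eraseTo atoms P.1))
decreasing_by
  all_goals simp_wf
  all_goals try have := List.sizeOf_lt_of_mem P.2
  all_goals omega

/-- The dissociation `Δ^P` corresponding to a plan `P`: for each join operator with join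
variables `JVar = ⋃_j HVar(P_j)`, every relation occurring in subplan `P_j` receives the
variables `JVar ∖ HVar(P_j)`. -/
def dissOf (atoms : A → Finset V) : Plan A V → A → Finset V
  | .atom _ => fun _ => ∅
  | .proj _ P => dissOf atoms P
  | .join Ps => fun i =>
      Ps.attach.foldr (fun P acc =>
        (if i ∈ atomsOf P.1 then
            (joinVars atoms Ps \ hvar atoms P.1) ∪ dissOf atoms P.1 i
          else ∅) ∪ acc) ∅
decreasing_by
  all_goals simp_wf
  all_goals try have := List.sizeOf_lt_of_mem P.2
  all_goals omega

end Plan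

/-- The recursive algorithm `MP` enumerating the minimal query plans of the query with
atom set `S` and head variables `H` (head variables are treated as constants):
* if the query has a single atom, return the projection of that atom onto the head
  variables;
* if the query (after removing the head variables) is disconnected, return any join of
  minimal plans of its connected components (each component keeping the head variables
  occurring in it);
* otherwise, for any minimal cut-set `ys` of the query minus its head variables, return
  the plan projecting `ys` away from any minimal plan of the query with head variables
  `H ∪ ys`. -/
inductive MPrel (atoms : A → Finset V) : Finset A → Finset V → Plan A V → Prop
  | single (i : A) (H : Finset V) : MPrel atoms {i} H (.proj H (.atom i))
  | disc (S : Finset A) (H : Finset V) (parts : List (Finset A)) (Ps : List (Plan A V))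
      (hdup : parts.Nodup) (hlen : 2 ≤ parts.length)
      (hparts : ∀ T : Finset A, T ∈ parts ↔ IsComp (fun i => atoms i \ H) S T)
      (hlen2 : parts.length = Ps.length)
      (hPs : ∀ n : ℕ, ∀ h1 : n < parts.length, ∀ h2 : n < Ps.length,
        MPrel atoms parts[n] (H ∩ (parts[n]).sup atoms) Ps[n]) :
      MPrel atoms S H (.join Ps)
  | conn (S : Finset A) (H : Finset V) (ys : Finset V) (P : Plan A V)
      (hcard : 2 ≤ S.card)
      (hconn : ¬ Disconn (fun i => atoms i \ H) S)
      (hcut : MinCut (fun i => atoms i \ H) S ys)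
      (hP : MPrel atoms S (H ∪ ys) P) :
      MPrel atoms S H (.proj H P)


/-! ### Auxiliary material for star queries -/

section StarAux

variable {k : ℕ}

/-- the atoms of the `k`-star query -/
def satoms (k : ℕ) : Fin (k + 1) → Finset (Fin k) :=
  fun i : Fin (k + 1) =>
    Fin.cases (Finset.univ : Finset (Fin k)) (fun j : Fin k => ({j} : Finset (Fin k))) i

/-- the dissociation of the star query associated with a permutation -/
def permDiss (σ : Equiv.Perm (Fin k)) : Fin (k + 1) → Finset (Fin k) :=
  fun i => Fin.cases ∅ (fun j => Finset.univ.filter (fun x => σ⁻¹ x < σ⁻¹ j)) i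

/-- the set of star-atoms (other than `R_0`) containing variable `x` after dissociation -/
def MM (Δ : Fin (k + 1) → Finset (Fin k)) (x : Fin k) : Finset (Fin k) :=
  Finset.univ.filter (fun j => x ∈ dissAtoms (satoms k) Δ j.succ)

lemma mem_MM {Δ : Fin (k + 1) → Finset (Fin k)} {x j : Fin k} :
    j ∈ MM Δ x ↔ x = j ∨ x ∈ Δ j.succ := by
  simp [MM, dissAtoms, satoms]

lemma self_mem_MM {Δ : Fin (k + 1) → Finset (Fin k)} (x : Fin k) : x ∈ MM Δ x :=
  mem_MM.mpr (Or.inl rfl)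

lemma varsOf_satoms : varsOf (satoms k) = Finset.univ := by
  refine Finset.Subset.antisymm (Finset.subset_univ _) ?_
  intro x _
  exact (@Finset.mem_sup _ _ (fun a b => Classical.propDecidable (a = b)) _ _ _).mpr
    ⟨0, Finset.mem_univ 0, by simp [satoms]⟩

lemma zero_mem_atOf {Δ : Fin (k + 1) → Finset (Fin k)} (x : Fin k) :
    (0 : Fin (k + 1)) ∈ atOf (dissAtoms (satoms k) Δ) Finset.univ x := by
  simp [atOf, dissAtoms, satoms]

lemma atOf_subset_iff {Δ : Fin (k + 1) → Finset (Fin k)} {x y : Fin k} :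
    atOf (dissAtoms (satoms k) Δ) Finset.univ x ⊆ atOf (dissAtoms (satoms k) Δ) Finset.univ y
      ↔ MM Δ x ⊆ MM Δ y := by
  constructor
  · intro h j hj
    have hx : j.succ ∈ atOf (dissAtoms (satoms k) Δ) Finset.univ x := by
      simp only [atOf, Finset.mem_filter, Finset.mem_univ, true_and]
      simpa [MM] using hj
    have := h hx
    simp only [atOf, Finset.mem_filter, Finset.mem_univ, true_and] at this
    simp [MM, this]
  · intro h i hi
    induction i using Fin.cases with
    | zero => exact zero_mem_atOf y
    | succ j =>
      simp only [atOf, Finset.mem_filter, Finset.mem_univ, true_and] at hi ⊢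
      have hj : j ∈ MM Δ x := by simp [MM, hi]
      have := h hj
      simpa [MM] using this

lemma hier_iff_chain (Δ : Fin (k + 1) → Finset (Fin k)) :
    HierOn (dissAtoms (satoms k) Δ) Finset.univ ∅ ↔
      ∀ x y : Fin k, MM Δ x ⊆ MM Δ y ∨ MM Δ y ⊆ MM Δ x := by
  constructor
  · intro h x y
    rcases h x (Finset.notMem_empty x) y (Finset.notMem_empty y) with h1 | h1 | h1
    · exact Or.inl (atOf_subset_iff.mp h1)
    · exfalso
      have h0 : (0 : Fin (k + 1)) ∈ (∅ : Finset (Fin (k + 1))) := by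
        rw [← h1]
        exact (@Finset.mem_inter _ (fun a b => Classical.propDecidable (a = b)) _ _ _).mpr
          ⟨zero_mem_atOf x, zero_mem_atOf y⟩
      simp at h0
    · exact Or.inr (atOf_subset_iff.mp h1)
  · intro h x _ y _
    rcases h x y with h1 | h1
    · exact Or.inl (atOf_subset_iff.mpr h1)
    · exact Or.inr (Or.inr (atOf_subset_iff.mpr h1))

lemma mem_permDiss_succ {σ : Equiv.Perm (Fin k)} {x j : Fin k} :
    x ∈ permDiss σ j.succ ↔ σ⁻¹ x < σ⁻¹ j := by
  simp [permDiss]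

lemma permDiss_zero (σ : Equiv.Perm (Fin k)) : permDiss σ 0 = ∅ := by
  simp [permDiss]

lemma isDiss_permDiss (σ : Equiv.Perm (Fin k)) : IsDiss (satoms k) ∅ (permDiss σ) := by
  intro i
  induction i using Fin.cases with
  | zero => simp [permDiss]
  | succ j =>
    intro x hx
    rw [mem_permDiss_succ] at hx
    have hxj : x ≠ j := by
      rintro rfl
      exact lt_irrefl _ hx
    simp [varsOf_satoms, satoms, hxj]

lemma mem_MM_permDiss {σ : Equiv.Perm (Fin k)} {x j : Fin k} :
    j ∈ MM (permDiss σ) x ↔ σ⁻¹ x ≤ σ⁻¹ j := by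
  rw [mem_MM, mem_permDiss_succ]
  constructor
  · rintro (rfl | h)
    · exact le_refl _
    · exact le_of_lt h
  · intro h
    rcases lt_or_eq_of_le h with h | h
    · exact Or.inr h
    · exact Or.inl ((Equiv.injective σ⁻¹) h)

lemma safe_permDiss (σ : Equiv.Perm (Fin k)) : SafeDiss (satoms k) ∅ (permDiss σ) := by
  refine ⟨isDiss_permDiss σ, (hier_iff_chain _).mpr ?_⟩
  intro x y
  rcases le_total (σ⁻¹ x) (σ⁻¹ y) with h | h
  · right
    intro j hj
    rw [mem_MM_permDiss] at hj ⊢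
    exact le_trans h hj
  · left
    intro j hj
    rw [mem_MM_permDiss] at hj ⊢
    exact le_trans h hj

lemma exists_permDiss_le (Δ : Fin (k + 1) → Finset (Fin k))
    (hs : SafeDiss (satoms k) ∅ Δ) :
    ∃ τ : Equiv.Perm (Fin k), dissLE (permDiss τ) Δ := by
  have hchain := (hier_iff_chain Δ).mp hs.2
  set φ : Fin k → ℕ := fun x => (k + 1 - (MM Δ x).card) * (k + 1) + x.val with hφ
  have hmod : ∀ x : Fin k, φ x % (k + 1) = x.val := by
    intro x
    have hlt : x.val < k + 1 := lt_trans x.isLt (Nat.lt_succ_self k)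
    show ((k + 1 - (MM Δ x).card) * (k + 1) + x.val) % (k + 1) = x.val
    rw [Nat.add_comm, Nat.add_mul_mod_self_right]
    exact Nat.mod_eq_of_lt hlt
  have hinj : Function.Injective φ := by
    intro x y h
    apply Fin.ext
    rw [← hmod x, ← hmod y, h]
  have hcard : ∀ x : Fin k, (MM Δ x).card ≤ k := by
    intro x
    have := Finset.card_le_univ (MM Δ x)
    simpa using this
  have key : ∀ x j : Fin k, φ x < φ j → x ∈ Δ j.succ := by
    intro x j hlt
    have hxj : x ≠ j := by
      rintro rfl
      exact lt_irrefl _ hlt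
    have hble : (MM Δ j).card ≤ (MM Δ x).card := by
      by_contra hab
      push_neg at hab
      have h1 : k + 1 - (MM Δ j).card + 1 ≤ k + 1 - (MM Δ x).card := by
        have := hcard j
        omega
      have h2 : φ j < (k + 1 - (MM Δ j).card + 1) * (k + 1) := by
        have hj : j.val < k + 1 := lt_trans j.isLt (Nat.lt_succ_self k)
        calc φ j < (k + 1 - (MM Δ j).card) * (k + 1) + (k + 1) :=
              Nat.add_lt_add_left hj _
          _ = (k + 1 - (MM Δ j).card + 1) * (k + 1) := by ring
      have h3 : (k + 1 - (MM Δ j).card + 1) * (k + 1) ≤ φ x :=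
        le_trans (Nat.mul_le_mul_right _ h1) (Nat.le_add_right _ _)
      omega
    have hsub : MM Δ j ⊆ MM Δ x := by
      rcases hchain x j with h | h
      · have := Finset.eq_of_subset_of_card_le h hble
        rw [this]
      · exact h
    have hjmem : j ∈ MM Δ x := hsub (self_mem_MM j)
    rcases mem_MM.mp hjmem with h | h
    · exact absurd h hxj
    · exact h
  refine ⟨Tuple.sort φ, ?_⟩
  have hmono : StrictMono (φ ∘ Tuple.sort φ) :=
    (Tuple.monotone_sort φ).strictMono_of_injective
      (hinj.comp (Tuple.sort φ).injective)
  intro i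
  induction i using Fin.cases with
  | zero => simp [permDiss_zero]
  | succ j =>
    intro x hx
    rw [mem_permDiss_succ] at hx
    have hφlt : φ x < φ j := by
      have := hmono hx
      simpa using this
    exact key x j hφlt

lemma permDiss_le_permDiss {σ τ : Equiv.Perm (Fin k)}
    (h : dissLE (permDiss τ) (permDiss σ)) : permDiss τ = permDiss σ := by
  funext i
  induction i using Fin.cases with
  | zero => simp [permDiss_zero]
  | succ j =>
    refine Finset.Subset.antisymm (h j.succ) ?_
    intro x hx
    rw [mem_permDiss_succ] at hx ⊢
    rcases lt_trichotomy (τ⁻¹ x) (τ⁻¹ j) with h1 | h1 | h1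
    · exact h1
    · exfalso
      have : x = j := (Equiv.injective τ⁻¹) h1
      subst this
      exact lt_irrefl _ hx
    · exfalso
      have : j ∈ permDiss τ x.succ := mem_permDiss_succ.mpr h1
      have := h x.succ this
      rw [mem_permDiss_succ] at this
      exact lt_asymm hx this

lemma minSafe_permDiss (σ : Equiv.Perm (Fin k)) :
    MinSafeDiss (satoms k) ∅ (permDiss σ) := by
  refine ⟨safe_permDiss σ, ?_⟩
  intro Δ' hΔ' hle
  obtain ⟨τ, hτ⟩ := exists_permDiss_le Δ' hΔ'
  have h2 : dissLE (permDiss τ) (permDiss σ) := fun i => (hτ i).trans (hle i)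
  have h3 := permDiss_le_permDiss h2
  funext i
  exact Finset.Subset.antisymm (hle i) (h3 ▸ hτ i)

lemma permDiss_injective : Function.Injective (permDiss (k := k)) := by
  intro σ τ h
  have hiff : ∀ x j : Fin k, σ⁻¹ x < σ⁻¹ j ↔ τ⁻¹ x < τ⁻¹ j := by
    intro x j
    rw [← mem_permDiss_succ (σ := σ), ← mem_permDiss_succ (σ := τ), h]
  have hg : StrictMono (fun a : Fin k => τ.symm (σ a)) := by
    intro a b hab
    have h1 := (hiff (σ a) (σ b)).mp (by simpa using hab)
    simpa [Equiv.Perm.inv_def] using h1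
  have hsurj : Function.Surjective (fun a : Fin k => τ.symm (σ a)) :=
    (σ.trans τ.symm).surjective
  have he : ∀ a : Fin k, τ.symm (σ a) = a := by
    intro a
    have h2 := Fin.coe_orderIso_apply (StrictMono.orderIsoOfSurjective _ hg hsurj) a
    rw [StrictMono.coe_orderIsoOfSurjective] at h2
    exact Fin.ext h2
  apply Equiv.ext
  intro a
  have h2 : τ.symm (σ a) = a := he a
  calc σ a = τ (τ.symm (σ a)) := (Equiv.apply_symm_apply τ (σ a)).symm
    _ = τ a := by rw [h2]

end StarAux

/-- Number of minimal plans of star queries.  For every `k ≥ 1`, the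
`k`-star query `q :- R_1('a',x_1), R_2(x_2), …, R_k(x_k), R_0(x_1,…,x_k)` (where `'a'` is
a constant and `x_1,…,x_k` are existential variables) has exactly `k!` minimal safe
dissociations (equivalently, minimal query plans). -/
theorem star_query_minimal_dissociation_count :
    ∀ k : ℕ, 1 ≤ k →
      {Δ : Fin (k + 1) → Finset (Fin k) |
          MinSafeDiss
            (fun i : Fin (k + 1) =>
              Fin.cases (Finset.univ : Finset (Fin k)) (fun j : Fin k => ({j} : Finset (Fin k))) i)
            (∅ : Finset (Fin k)) Δ}.ncard = Nat.factorial k := by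
  intro k _
  have hset : {Δ : Fin (k + 1) → Finset (Fin k) | MinSafeDiss (satoms k) ∅ Δ} =
      Set.range (permDiss (k := k)) := by
    ext Δ
    constructor
    · intro hΔ
      obtain ⟨τ, hτ⟩ := exists_permDiss_le Δ hΔ.1
      exact ⟨τ, hΔ.2 (permDiss τ) (safe_permDiss τ) hτ⟩
    · rintro ⟨σ, rfl⟩
      exact minSafe_permDiss σ
  show {Δ : Fin (k + 1) → Finset (Fin k) | MinSafeDiss (satoms k) ∅ Δ}.ncard = k.factorial
  rw [hset, ← Nat.card_coe_set_eq, Nat.card_range_of_injective permDiss_injective,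
    Nat.card_eq_fintype_card, Fintype.card_perm, Fintype.card_fin]

end

end PDB
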